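/- arXiv:2207.06074 — 2 statements merged into one kernel-verified Lean document; each statement's English description precedes it below -/
import Mathlib

section
/- For α ∈ (0, π/4], let R = 1/sin(α) and t* = R·tan(α/2). Then 1/2 ≤ t* ≤ 2 − √2. -/
/-- For `α ∈ (0, π/4]`, with `R = 1/sin α` and `t* = R·tan(α/2)`,
one has `1/2 ≤ t* ≤ 2 − √2`. -/
theorem tstar_bounds (α : ℝ) (hα : α ∈ Set.Ioc 0 (Real.pi / 4)) :
    1 / 2 ≤ (1 / Real.sin α) * Real.tan (α / 2) ∧
    (1 / Real.sin α) * Real.tan (α / 2) ≤ 2 - Real.sqrt 2 := by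
  obtain ⟨h0, h4⟩ := hα
  have hpi := Real.pi_pos
  have hαlt : α < Real.pi / 2 := lt_of_le_of_lt h4 (by linarith)
  have hs2 : 0 < Real.sin (α / 2) :=
    Real.sin_pos_of_pos_of_lt_pi (by linarith) (by linarith)
  have hc2 : 0 < Real.cos (α / 2) :=
    Real.cos_pos_of_mem_Ioo ⟨by linarith, by linarith⟩
  have hsin : Real.sin α = 2 * Real.sin (α / 2) * Real.cos (α / 2) := by
    rw [← Real.sin_two_mul]; ring_nf
  have hcos : 1 + Real.cos α = 2 * Real.cos (α / 2) ^ 2 := by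
    have h := Real.cos_sq (α / 2)
    rw [show 2 * (α / 2) = α by ring] at h
    linarith
  have hkey : (1 / Real.sin α) * Real.tan (α / 2) = 1 / (1 + Real.cos α) := by
    rw [Real.tan_eq_sin_div_cos, hsin, hcos]
    field_simp
  rw [hkey]
  have hcle : Real.cos α ≤ 1 := Real.cos_le_one α
  have hcge : Real.sqrt 2 / 2 ≤ Real.cos α := by
    have := Real.cos_le_cos_of_nonneg_of_le_pi (le_of_lt h0) (by linarith) h4
    rwa [Real.cos_pi_div_four] at this
  have hsqrt2 : Real.sqrt 2 < 2 := by
    nlinarith [Real.sq_sqrt (by norm_num : (2:ℝ) ≥ 0), Real.sqrt_nonneg 2]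
  have hpos : 0 < 1 + Real.cos α := by nlinarith [Real.sqrt_nonneg 2]
  constructor
  · rw [div_le_div_iff₀ (by norm_num) hpos]; linarith
  · rw [div_le_iff₀ hpos]
    nlinarith [Real.sq_sqrt (by norm_num : (2:ℝ) ≥ 0)]
end

section
/- Let K be a nonempty compact subset of ℝ^D. Then the weak feature size of K is at most the radius of the smallest enclosing ball of K; in particular, for any r strictly greater than the circumradius rad(K), the offset K^r = {x : d(x,K) ≤ r} is star-shaped with respect to any center of a smallest enclosing ball of K. -/
/-- Star-shapedness of offsets: let `K ⊆ ℝ^D` be a nonempty compact set, `c` a center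
of an enclosing ball of radius `rad`, and `r ≥ rad`. Then for any `y` with
`d(y,K) ≤ r`, every point of the segment `[c,y]` is at distance at most `r` from `K`;
i.e. the offset `K^r` is star-shaped with respect to `c`. In particular
`wfs(K) ≤ rad(K)`. -/
theorem offset_starShaped {D : ℕ} (K : Set (EuclideanSpace ℝ (Fin D)))
    (hK : IsCompact K) (hne : K.Nonempty)
    (c : EuclideanSpace ℝ (Fin D)) (rad r : ℝ)
    (hc : ∀ x ∈ K, dist c x ≤ rad) (hr : rad ≤ r) :
    ∀ y : EuclideanSpace ℝ (Fin D), Metric.infDist y K ≤ r →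
      ∀ z ∈ segment ℝ c y, Metric.infDist z K ≤ r := by
  intro y hy z hz
  obtain ⟨x, hxK, hx⟩ := hK.exists_infDist_eq_dist hne y
  have hzw : Wbtw ℝ c z y := mem_segment_iff_wbtw.mp hz
  have h1 : dist z x ≤ max (dist c x) (dist y x) := hzw.dist_le_max_dist x
  have h2 : dist y x ≤ r := by rw [← hx]; exact hy
  have h3 : dist c x ≤ r := (hc x hxK).trans hr
  calc Metric.infDist z K ≤ dist z x := Metric.infDist_le_dist_of_mem hxK
    _ ≤ r := h1.trans (max_le h3 h2)
end
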